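/- arXiv:1701.07733 — 11 statements merged into one kernel-verified Lean document; each statement's English description precedes it below -/
import Mathlib

section
/- The qudit hypergraph state |H(m)⟩ equals the uniform product state |+⟩^{⊗N} (the vector all of whose amplitudes are d^{−N/2}, i.e. |H(0)⟩) if and only if m(e) = 0 in ZMod d for every hyperedge e ⊆ Fin N. -/
open Finset

noncomputable section

/-- The primitive `d`-th root of unity `ω = exp(2πi/d)`. -/
def omega (d : ℕ) : ℂ := Complex.exp (2 * Real.pi * Complex.I / d)

/-- The `N`-qudit Hilbert space, modeled as functions from points to amplitudes. -/
abbrev QV (d N : ℕ) := (Fin N → Fin d) → ℂ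

/-- The qudit hypergraph state `|H(m)⟩` for a multiplicity function `m`. -/
def Hstate (d N : ℕ) (m : Finset (Fin N) → ZMod d) : QV d N :=
  fun i => (d : ℂ) ^ (-(N : ℂ)/2) *
    omega d ^ (∑ e : Finset (Fin N), m e * ∏ k ∈ e, ((i k : ℕ) : ZMod d)).val

/-- The qudit hypergraph state `|H(m)⟩` equals the uniform product
state `|+⟩^{⊗N}` (all amplitudes `d^{-N/2}`, i.e. `|H(0)⟩`) iff `m e = 0` for all `e`. -/
theorem Hstate_eq_plus_iff (d N : ℕ) (hd : 2 ≤ d) (hN : 1 ≤ N)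
    (m : Finset (Fin N) → ZMod d) :
    Hstate d N m = (fun _ => (d : ℂ) ^ (-(N : ℂ)/2)) ↔
      ∀ e : Finset (Fin N), m e = 0 := by
  haveI : NeZero d := ⟨by omega⟩
  constructor
  · intro h
    have hω : IsPrimitiveRoot (omega d) d :=
      Complex.isPrimitiveRoot_exp d (by omega)
    have hc : (d : ℂ) ^ (-(N : ℂ)/2) ≠ 0 := by
      rw [Ne, Complex.cpow_eq_zero_iff]
      simp [show (d:ℂ) ≠ 0 from Nat.cast_ne_zero.mpr (by omega)]
    -- every evaluation of the multilinear polynomial vanishes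
    have hS : ∀ i : Fin N → Fin d,
        (∑ e : Finset (Fin N), m e * ∏ k ∈ e, ((i k : ℕ) : ZMod d)) = 0 := by
      intro i
      have hi := congrFun h i
      simp only [Hstate] at hi
      have h1 : omega d ^ (∑ e : Finset (Fin N),
          m e * ∏ k ∈ e, ((i k : ℕ) : ZMod d)).val = 1 := by
        exact mul_left_cancel₀ hc (by rw [hi, mul_one])
      have hdvd := (hω.pow_eq_one_iff_dvd _).mp h1
      have hv := ZMod.val_lt (∑ e : Finset (Fin N),
          m e * ∏ k ∈ e, ((i k : ℕ) : ZMod d))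
      exact (ZMod.val_eq_zero _).mp (Nat.eq_zero_of_dvd_of_lt hdvd hv)
    -- evaluating at indicators gives subset sums
    have hsum : ∀ S : Finset (Fin N), ∑ e ∈ S.powerset, m e = 0 := by
      intro S
      have hone : (1 : ℕ) < d := by omega
      set x : Fin N → Fin d := fun k => if k ∈ S then ⟨1, hone⟩ else ⟨0, by omega⟩ with hx
      have key := hS x
      have heval : ∀ e : Finset (Fin N),
          (∏ k ∈ e, ((x k : ℕ) : ZMod d)) = if e ⊆ S then 1 else 0 := by
        intro e
        by_cases he : e ⊆ S
        · rw [if_pos he]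
          apply Finset.prod_eq_one
          intro k hk
          simp [hx, he hk]
        · rw [if_neg he]
          obtain ⟨k, hk, hkS⟩ := Finset.not_subset.mp he
          apply Finset.prod_eq_zero hk
          simp [hx, hkS]
      rw [Finset.sum_congr rfl (fun e _ => by rw [heval e])] at key
      simp only [mul_ite, mul_one, mul_zero] at key
      have h2 : ∑ e ∈ Finset.univ.filter (· ⊆ S), m e = 0 := by
        rw [Finset.sum_filter]; exact key
      rwa [show Finset.univ.filter (· ⊆ S) = S.powerset by ext e; simp] at h2
    intro e
    induction e using Finset.strongInduction with
    | _ e ih =>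
      have h1 := hsum e
      rw [← Finset.sum_erase_add _ _ (Finset.mem_powerset_self e)] at h1
      rw [Finset.sum_eq_zero (fun a ha => ?_), zero_add] at h1
      · exact h1
      · rw [Finset.mem_erase, Finset.mem_powerset] at ha
        exact ih a (ssubset_of_ne_of_subset ha.1 ha.2)
  · intro h
    funext i
    simp [Hstate, h]

end
end

section
/- For multiplicity functions m, m' : Finset (Fin N) → ZMod d, the qudit hypergraph states satisfy |H(m)⟩ = |H(m')⟩ if and only if m = m'. In other words, the map m ↦ |H(m)⟩ from multiplicity functions to vectors is injective, so multi-hypergraphs and qudit hypergraph states are in one-to-one correspondence. -/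
/-!
Since `ω` is a primitive `d`-th root of unity, equal states have equal phase polynomials
`∑ₑ m(e) ∏_{k ∈ e} i(k)` at every basis point `i`. At the 0/1 indicator point of a set `s` the
phase polynomial is `∑_{t ⊆ s} m(t)`, and Möbius inversion on the Boolean lattice recovers `m`.
-/

open Finset

noncomputable section

theorem Finset.eq_of_forall_sum_powerset_eq {α β : Type*} [DecidableEq α]
    [AddCancelCommMonoid β] {f g : Finset α → β}
    (h : ∀ s : Finset α, ∑ t ∈ s.powerset, f t = ∑ t ∈ s.powerset, g t) : f = g := by
  funext s
  induction s using Finset.strongInduction with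
  | H s ih =>
    have hs := h s
    rw [← sum_erase_add _ _ (mem_powerset_self s), ← sum_erase_add _ _ (mem_powerset_self s),
      sum_congr rfl fun t ht => ih t ?_] at hs
    · exact add_left_cancel hs
    · rw [mem_erase, mem_powerset] at ht
      exact ht.2.ssubset_of_ne ht.1

theorem Finset.sum_mul_prod_boole_mem {α R : Type*} [Fintype α] [DecidableEq α]
    [CommSemiring R] (f : Finset α → R) (s : Finset α) :
    ∑ t, f t * ∏ k ∈ t, (if k ∈ s then 1 else 0 : R) = ∑ t ∈ s.powerset, f t := by
  simp only [prod_boole, mul_ite, mul_one, mul_zero, ← sum_filter]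
  congr 1
  ext t
  simp [subset_iff]

theorem omega_pow_val_injective (d : ℕ) [NeZero d] :
    Function.Injective fun x : ZMod d => omega d ^ x.val := fun x y hxy =>
  ZMod.val_injective d <|
    (Complex.isPrimitiveRoot_exp d (NeZero.ne d)).pow_inj (ZMod.val_lt x) (ZMod.val_lt y) hxy

def phase {d N : ℕ} (m : Finset (Fin N) → ZMod d) (i : Fin N → Fin d) : ZMod d :=
  ∑ e : Finset (Fin N), m e * ∏ k ∈ e, ((i k : ℕ) : ZMod d)

theorem Hstate_apply (d N : ℕ) (m : Finset (Fin N) → ZMod d) (i : Fin N → Fin d) :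
    Hstate d N m i = (d : ℂ) ^ (-(N : ℂ) / 2) * omega d ^ (phase m i).val :=
  rfl

theorem phase_eq_of_Hstate_eq {d N : ℕ} [NeZero d] {m m' : Finset (Fin N) → ZMod d}
    (h : Hstate d N m = Hstate d N m') (i : Fin N → Fin d) : phase m i = phase m' i := by
  have hnorm : (d : ℂ) ^ (-(N : ℂ) / 2) ≠ 0 := by
    simp [Complex.cpow_eq_zero_iff, NeZero.ne d]
  have hi := congrFun h i
  rw [Hstate_apply, Hstate_apply] at hi
  exact omega_pow_val_injective d (mul_left_cancel₀ hnorm hi)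

def indicatorPoint {N d : ℕ} (hd : 2 ≤ d) (s : Finset (Fin N)) : Fin N → Fin d :=
  fun k => if k ∈ s then ⟨1, hd⟩ else ⟨0, by omega⟩

theorem phase_indicatorPoint {N d : ℕ} (hd : 2 ≤ d) (m : Finset (Fin N) → ZMod d)
    (s : Finset (Fin N)) : phase m (indicatorPoint hd s) = ∑ t ∈ s.powerset, m t := by
  rw [phase, ← sum_mul_prod_boole_mem]
  congr! with t _ k _
  unfold indicatorPoint
  split_ifs <;> simp

theorem Hstate_inj_iff_general (d N : ℕ) (hd : 2 ≤ d)
    (m m' : Finset (Fin N) → ZMod d) :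
    Hstate d N m = Hstate d N m' ↔ m = m' := by
  refine ⟨fun h => ?_, congrArg _⟩
  have : NeZero d := ⟨by omega⟩
  refine Finset.eq_of_forall_sum_powerset_eq fun s => ?_
  rw [← phase_indicatorPoint hd m s, ← phase_indicatorPoint hd m' s]
  exact phase_eq_of_Hstate_eq h _

/-- Two qudit hypergraph states are equal iff their multiplicity
functions coincide: multi-hypergraphs and qudit hypergraph states are in one-to-one
correspondence. -/
theorem Hstate_inj_iff (d N : ℕ) (hd : 2 ≤ d) (hN : 1 ≤ N)
    (m m' : Finset (Fin N) → ZMod d) :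
    Hstate d N m = Hstate d N m' ↔ m = m' :=
  Hstate_inj_iff_general d N hd m m'

end
end

section
/- Let S : Finset (Fin N) be such that S and its complement Sᶜ are both nonempty. If there exists a hyperedge e with m(e) ≠ 0 in ZMod d such that e ∩ S and e ∩ Sᶜ are both nonempty (i.e., a hyperedge of nonzero multiplicity connects the two parts), then |H(m)⟩ is not a product state across (S, Sᶜ); that is, the two subsystems are entangled. -/
open Finset

noncomputable section

/-- A state `ψ` is a product state across the bipartition `(S, Sᶜ)`:
`ψ i = f i * g i` with `f` depending only on the restriction of `i` to `S`
and `g` depending only on the restriction of `i` to `Sᶜ`. -/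
def IsProductAcross (d N : ℕ) (S : Finset (Fin N)) (ψ : QV d N) : Prop :=
  ∃ f g : (Fin N → Fin d) → ℂ,
    (∀ i i' : Fin N → Fin d, (∀ k ∈ S, i k = i' k) → f i = f i') ∧
    (∀ i i' : Fin N → Fin d, (∀ k ∉ S, i k = i' k) → g i = g i') ∧
    (∀ i, ψ i = f i * g i)

lemma omega_prim (d : ℕ) (hd : 2 ≤ d) : IsPrimitiveRoot (omega d) d := by
  simpa [omega] using Complex.isPrimitiveRoot_exp d (by omega)

lemma omega_pow_mod (d : ℕ) (hd : 2 ≤ d) (n : ℕ) : omega d ^ (n % d) = omega d ^ n := by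
  have h1 : omega d ^ d = 1 := (omega_prim d hd).pow_eq_one
  conv_rhs => rw [← Nat.div_add_mod n d]
  rw [pow_add, pow_mul, h1, one_pow, one_mul]

lemma chi_add (d : ℕ) (hd : 2 ≤ d) (x y : ZMod d) :
    omega d ^ (x + y).val = omega d ^ x.val * omega d ^ y.val := by
  haveI : NeZero d := ⟨by omega⟩
  rw [ZMod.val_add, omega_pow_mod d hd, pow_add]

lemma chi_inj (d : ℕ) (hd : 2 ≤ d) {x y : ZMod d}
    (h : omega d ^ x.val = omega d ^ y.val) : x = y := by
  haveI : NeZero d := ⟨by omega⟩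
  have hne : omega d ^ y.val ≠ 0 := pow_ne_zero _ (Complex.exp_ne_zero _)
  have hx : x = y + (x - y) := by ring
  have h2 : omega d ^ y.val * omega d ^ (x - y).val = omega d ^ y.val * 1 := by
    rw [mul_one, ← chi_add d hd, ← hx, h]
  have h3 : omega d ^ (x - y).val = 1 := mul_left_cancel₀ hne h2
  have h4 : d ∣ (x - y).val := ((omega_prim d hd).pow_eq_one_iff_dvd _).mp h3
  have h5 : (x - y).val = 0 := Nat.eq_zero_of_dvd_of_lt h4 (ZMod.val_lt _)
  have h6 : x - y = 0 := (ZMod.val_eq_zero _).mp h5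
  exact sub_eq_zero.mp h6

/-- If some hyperedge of nonzero multiplicity connects `S` with `Sᶜ`,
then `|H(m)⟩` is not a product state across `(S, Sᶜ)`: the two subsystems are entangled. -/
theorem Hstate_not_product_of_connecting_edge (d N : ℕ) (hd : 2 ≤ d) (hN : 1 ≤ N)
    (m : Finset (Fin N) → ZMod d) (S : Finset (Fin N))
    (hS : S.Nonempty) (hSc : Sᶜ.Nonempty)
    (hconn : ∃ e : Finset (Fin N), m e ≠ 0 ∧ (e ∩ S).Nonempty ∧ (e ∩ Sᶜ).Nonempty) :
    ¬ IsProductAcross d N S (Hstate d N m) := by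
  classical
  rintro ⟨f, g, hf, hg, hfg⟩
  haveI : NeZero d := ⟨by omega⟩
  -- pick a minimal connecting edge
  set T : Finset (Finset (Fin N)) :=
    univ.filter (fun e => m e ≠ 0 ∧ (e ∩ S).Nonempty ∧ (e ∩ Sᶜ).Nonempty) with hT
  have hTne : T.Nonempty := by
    obtain ⟨e, he⟩ := hconn
    exact ⟨e, by simp [hT, he.1, he.2.1, he.2.2]⟩
  obtain ⟨e0, he0T, hmin⟩ := T.exists_min_image (fun e => e.card) hTne
  have he0 : m e0 ≠ 0 ∧ (e0 ∩ S).Nonempty ∧ (e0 ∩ Sᶜ).Nonempty := by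
    simpa [hT] using he0T
  -- indicator assignments
  have h1d : (1 : ℕ) < d := by omega
  have h0d : (0 : ℕ) < d := by omega
  set ind : Finset (Fin N) → (Fin N → Fin d) :=
    fun U k => if k ∈ U then ⟨1, h1d⟩ else ⟨0, h0d⟩ with hind
  set P : (Fin N → Fin d) → ZMod d :=
    fun v => ∑ e : Finset (Fin N), m e * ∏ k ∈ e, ((v k : ℕ) : ZMod d) with hPdef
  have hH : ∀ v, Hstate d N m v = (d : ℂ) ^ (-(N : ℂ)/2) * omega d ^ (P v).val :=
    fun v => rfl
  -- the four-point identity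
  have key : Hstate d N m (ind e0) * Hstate d N m (ind ∅)
      = Hstate d N m (ind (e0 ∩ S)) * Hstate d N m (ind (e0 ∩ Sᶜ)) := by
    rw [hfg, hfg, hfg, hfg]
    have h1 : f (ind (e0 ∩ S)) = f (ind e0) := by
      apply hf; intro k hk; simp [hind, mem_inter, hk]
    have h2 : g (ind (e0 ∩ S)) = g (ind ∅) := by
      apply hg; intro k hk; simp [hind, mem_inter, hk]
    have h3 : f (ind (e0 ∩ Sᶜ)) = f (ind ∅) := by
      apply hf; intro k hk; simp [hind, mem_inter, mem_compl, hk]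
    have h4 : g (ind (e0 ∩ Sᶜ)) = g (ind e0) := by
      apply hg; intro k hk; simp [hind, mem_inter, mem_compl, hk]
    rw [h1, h2, h3, h4]; ring
  -- derive the ZMod identity
  have hc : (d : ℂ) ^ (-(N : ℂ)/2) ≠ 0 := by
    intro h
    rw [Complex.cpow_eq_zero_iff] at h
    exact (Nat.cast_ne_zero.mpr (by omega : d ≠ 0)) h.1
  have hcc : (d : ℂ) ^ (-(N : ℂ)/2) * (d : ℂ) ^ (-(N : ℂ)/2) ≠ 0 := mul_ne_zero hc hc
  rw [hH, hH, hH, hH] at key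
  have h5 : omega d ^ (P (ind e0)).val * omega d ^ (P (ind ∅)).val
      = omega d ^ (P (ind (e0 ∩ S))).val * omega d ^ (P (ind (e0 ∩ Sᶜ))).val :=
    mul_left_cancel₀ hcc (by linear_combination key)
  have h6 : P (ind e0) + P (ind ∅) = P (ind (e0 ∩ S)) + P (ind (e0 ∩ Sᶜ)) := by
    apply chi_inj d hd
    rw [chi_add d hd, chi_add d hd]; exact h5
  -- compute P on an indicator
  have hP : ∀ U : Finset (Fin N),
      P (ind U) = ∑ e : Finset (Fin N), m e * (if e ⊆ U then 1 else 0) := by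
    intro U
    rw [hPdef]
    apply Finset.sum_congr rfl
    intro e _
    congr 1
    have hval : ∀ k, (((ind U k : Fin d) : ℕ) : ZMod d)
        = (if k ∈ U then (1 : ZMod d) else 0) := by
      intro k; rw [hind]; by_cases hk : k ∈ U <;> simp [hk]
    rw [Finset.prod_congr rfl (fun k _ => hval k)]
    by_cases h : e ⊆ U
    · rw [if_pos h]
      apply Finset.prod_eq_one
      intro k hk
      rw [if_pos (h hk)]
    · rw [if_neg h]
      obtain ⟨k, hk, hkU⟩ := Finset.not_subset.mp h
      exact Finset.prod_eq_zero hk (by rw [if_neg hkU])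
  rw [hP, hP, hP, hP] at h6
  -- the combined vanishing sum
  have hsum0 : ∑ e : Finset (Fin N), m e *
      ((if e ⊆ e0 then (1 : ZMod d) else 0) + (if e ⊆ (∅ : Finset (Fin N)) then 1 else 0)
        - (if e ⊆ e0 ∩ S then 1 else 0) - (if e ⊆ e0 ∩ Sᶜ then 1 else 0)) = 0 := by
    have expand : ∑ e : Finset (Fin N), m e *
        ((if e ⊆ e0 then (1 : ZMod d) else 0) + (if e ⊆ (∅ : Finset (Fin N)) then 1 else 0)
          - (if e ⊆ e0 ∩ S then 1 else 0) - (if e ⊆ e0 ∩ Sᶜ then 1 else 0))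
        = (∑ e : Finset (Fin N), m e * (if e ⊆ e0 then (1 : ZMod d) else 0))
          + (∑ e : Finset (Fin N), m e * (if e ⊆ (∅ : Finset (Fin N)) then 1 else 0))
          - (∑ e : Finset (Fin N), m e * (if e ⊆ e0 ∩ S then 1 else 0))
          - (∑ e : Finset (Fin N), m e * (if e ⊆ e0 ∩ Sᶜ then 1 else 0)) := by
      simp only [mul_add, mul_sub]
      rw [Finset.sum_sub_distrib, Finset.sum_sub_distrib, Finset.sum_add_distrib]
    rw [expand]
    rw [h6]; ring
  -- the combined sum equals m e0
  have hsum1 : ∑ e : Finset (Fin N), m e *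
      ((if e ⊆ e0 then (1 : ZMod d) else 0) + (if e ⊆ (∅ : Finset (Fin N)) then 1 else 0)
        - (if e ⊆ e0 ∩ S then 1 else 0) - (if e ⊆ e0 ∩ Sᶜ then 1 else 0)) = m e0 := by
    rw [Finset.sum_eq_single e0]
    · have h2 : ¬ e0 ⊆ (∅ : Finset (Fin N)) := by
        obtain ⟨k, hk⟩ := he0.2.1
        intro h; exact absurd (h (mem_inter.mp hk).1) (notMem_empty k)
      have h3 : ¬ e0 ⊆ e0 ∩ S := by
        obtain ⟨k, hk⟩ := he0.2.2
        intro h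
        have := mem_inter.mp (h (mem_inter.mp hk).1)
        exact (mem_compl.mp (mem_inter.mp hk).2) this.2
      have h4 : ¬ e0 ⊆ e0 ∩ Sᶜ := by
        obtain ⟨k, hk⟩ := he0.2.1
        intro h
        have := mem_inter.mp (h (mem_inter.mp hk).1)
        exact (mem_compl.mp this.2) (mem_inter.mp hk).2
      simp [h2, h3, h4]
    · intro e _ hne
      by_cases h0 : e ⊆ e0
      · by_cases hcS : (e ∩ S).Nonempty
        · by_cases hcSc : (e ∩ Sᶜ).Nonempty
          · have hlt : e.card < e0.card :=
              card_lt_card (Finset.ssubset_iff_subset_ne.mpr ⟨h0, hne⟩)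
            have hnotT : e ∉ T := fun hmem => absurd (hmin e hmem) (by omega)
            have hme : m e = 0 := by
              by_contra hm
              exact hnotT (by simp [hT, hm, hcS, hcSc])
            simp [hme]
          · -- e ∩ Sᶜ = ∅, so e ⊆ e0 ∩ S
            have hSc0 : e ∩ Sᶜ = ∅ := not_nonempty_iff_eq_empty.mp hcSc
            have hsub : e ⊆ e0 ∩ S := by
              intro k hk
              refine mem_inter.mpr ⟨h0 hk, ?_⟩
              by_contra hkS
              have : k ∈ e ∩ Sᶜ := mem_inter.mpr ⟨hk, mem_compl.mpr hkS⟩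
              rw [hSc0] at this; exact notMem_empty k this
            by_cases he' : e = ∅
            · subst he'; simp
            · have hA : ¬ e ⊆ (∅ : Finset (Fin N)) := by
                intro h
                exact he' (Finset.subset_empty.mp h)
              have hC : ¬ e ⊆ e0 ∩ Sᶜ := by
                intro h
                obtain ⟨k, hk⟩ := Finset.nonempty_of_ne_empty he'
                have : k ∈ e ∩ Sᶜ := mem_inter.mpr ⟨hk, (mem_inter.mp (h hk)).2⟩
                rw [hSc0] at this; exact notMem_empty k this
              simp [h0, hA, hsub, hC]
        · -- e ∩ S = ∅, so e ⊆ e0 ∩ Sᶜ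
          have hS0 : e ∩ S = ∅ := not_nonempty_iff_eq_empty.mp hcS
          have hsub : e ⊆ e0 ∩ Sᶜ := by
            intro k hk
            refine mem_inter.mpr ⟨h0 hk, mem_compl.mpr ?_⟩
            intro hkS
            have : k ∈ e ∩ S := mem_inter.mpr ⟨hk, hkS⟩
            rw [hS0] at this; exact notMem_empty k this
          by_cases he' : e = ∅
          · subst he'; simp
          · have hA : ¬ e ⊆ (∅ : Finset (Fin N)) := by
              intro h; exact he' (Finset.subset_empty.mp h)
            have hB : ¬ e ⊆ e0 ∩ S := by
              intro h
              obtain ⟨k, hk⟩ := Finset.nonempty_of_ne_empty he'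
              have : k ∈ e ∩ S := mem_inter.mpr ⟨hk, (mem_inter.mp (h hk)).2⟩
              rw [hS0] at this; exact notMem_empty k this
            simp [h0, hA, hB, hsub]
      · have hA : ¬ e ⊆ (∅ : Finset (Fin N)) := fun h => h0 (h.trans (empty_subset _))
        have hB : ¬ e ⊆ e0 ∩ S := fun h => h0 (h.trans inter_subset_left)
        have hC : ¬ e ⊆ e0 ∩ Sᶜ := fun h => h0 (h.trans inter_subset_left)
        simp [h0, hA, hB, hC]
    · intro h; exact absurd (mem_univ e0) h
  exact he0.1 (by rw [← hsum1, hsum0])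

end
end

section
/- Call two vertices k, k' ∈ Fin N adjacent if there exists a hyperedge e with m(e) ≠ 0 containing both, and call the multi-hypergraph of m connected if N ≥ 2 and every pair of vertices is joined by the reflexive–transitive closure of this adjacency relation. If the multi-hypergraph of m is connected, then |H(m)⟩ is genuinely entangled: for every S : Finset (Fin N) with S and Sᶜ both nonempty, |H(m)⟩ is not a product state across (S, Sᶜ). -/
open Finset

noncomputable section

/-- Two vertices are adjacent if some hyperedge of nonzero multiplicity contains both. -/
def HAdj (d N : ℕ) (m : Finset (Fin N) → ZMod d) (k k' : Fin N) : Prop :=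
  ∃ e : Finset (Fin N), m e ≠ 0 ∧ k ∈ e ∧ k' ∈ e

/-- The multi-hypergraph of `m` is connected: `N ≥ 2` and every pair of vertices is
joined by the reflexive–transitive closure of the adjacency relation. -/
def HConnected (d N : ℕ) (m : Finset (Fin N) → ZMod d) : Prop :=
  2 ≤ N ∧ ∀ k k' : Fin N, Relation.ReflTransGen (HAdj d N m) k k'

/-- Auxiliary: if ω^x = ω^y then x ≡ y mod d. -/
lemma omega_pow_inj (d : ℕ) (hd : d ≠ 0) {x y : ℕ} (h : omega d ^ x = omega d ^ y) :
    (x : ZMod d) = (y : ZMod d) := by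
  have hprim : IsPrimitiveRoot (omega d) d := Complex.isPrimitiveRoot_exp d hd
  have hmod : ∀ z : ℕ, omega d ^ z = omega d ^ (z % d) := by
    intro z
    conv_lhs => rw [← Nat.div_add_mod z d]
    rw [pow_add, pow_mul, hprim.pow_eq_one, one_pow, one_mul]
  rw [hmod x, hmod y] at h
  have hd' : 0 < d := Nat.pos_of_ne_zero hd
  have := hprim.pow_inj (Nat.mod_lt _ hd') (Nat.mod_lt _ hd') h
  rw [← ZMod.natCast_mod x d, ← ZMod.natCast_mod y d, this]

/-- Auxiliary: product of indicator values. -/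
lemma prod_ind {N : ℕ} (d : ℕ) (A e : Finset (Fin N)) :
    (∏ k ∈ e, if k ∈ A then (1 : ZMod d) else 0) = if e ⊆ A then 1 else 0 := by
  by_cases h : e ⊆ A
  · rw [if_pos h]
    exact Finset.prod_eq_one fun k hk => if_pos (h hk)
  · rw [if_neg h]
    obtain ⟨k, hk, hkA⟩ := Finset.not_subset.mp h
    exact Finset.prod_eq_zero hk (if_neg hkA)

/-- Auxiliary: a walk from inside `S` to outside `S` crosses via some nonzero edge. -/
lemma exists_crossing {d N : ℕ} (m : Finset (Fin N) → ZMod d) (S : Finset (Fin N))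
    {a b : Fin N} (h : Relation.ReflTransGen (HAdj d N m) a b) :
    a ∈ S → b ∉ S → ∃ e, m e ≠ 0 ∧ (∃ x ∈ e, x ∈ S) ∧ ∃ y ∈ e, y ∉ S := by
  induction h using Relation.ReflTransGen.head_induction_on with
  | refl => intro ha hb; exact absurd ha hb
  | @head a' c hadj hrest ih =>
    intro ha hb
    by_cases hc : c ∈ S
    · exact ih hc hb
    · obtain ⟨e, hme, hae, hce⟩ := hadj
      exact ⟨e, hme, ⟨a', hae, ha⟩, ⟨c, hce, hc⟩⟩

/-- If the multi-hypergraph of `m` is connected, then `|H(m)⟩` is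
genuinely entangled: it is not a product state across any nontrivial bipartition. -/
theorem Hstate_genuinely_entangled_of_connected (d N : ℕ) (hd : 2 ≤ d) (hN : 1 ≤ N)
    (m : Finset (Fin N) → ZMod d) (hconn : HConnected d N m) :
    ∀ S : Finset (Fin N), S.Nonempty → Sᶜ.Nonempty →
      ¬ IsProductAcross d N S (Hstate d N m) := by
  classical
  intro S hS hSc hprod
  obtain ⟨f, g, hf, hg, hfg⟩ := hprod
  haveI : NeZero d := ⟨by omega⟩
  set E : (Fin N → Fin d) → ZMod d :=
    fun i => ∑ e : Finset (Fin N), m e * ∏ k ∈ e, ((i k : ℕ) : ZMod d) with hE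
  set c : ℂ := (d : ℂ) ^ (-(N : ℂ)/2) with hcdef
  have hcne : c ≠ 0 := by
    rw [hcdef]
    rw [Ne, Complex.cpow_eq_zero_iff]
    push_neg
    intro h
    exfalso
    have : (d : ℂ) ≠ 0 := by
      simp only [Ne, Nat.cast_eq_zero]
      omega
    exact this h
  set mix : (Fin N → Fin d) → (Fin N → Fin d) → (Fin N → Fin d) :=
    fun i j k => if k ∈ S then i k else j k with hmix
  -- Key identity from the product structure
  have hkey : ∀ i j : Fin N → Fin d, E i + E j = E (mix i j) + E (mix j i) := by
    intro i j
    have hfi : f (mix i j) = f i := hf _ _ (fun k hk => by simp [hmix, hk])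
    have hgj : g (mix i j) = g j := hg _ _ (fun k hk => by simp [hmix, hk])
    have hfj : f (mix j i) = f j := hf _ _ (fun k hk => by simp [hmix, hk])
    have hgi : g (mix j i) = g i := hg _ _ (fun k hk => by simp [hmix, hk])
    have h1 : Hstate d N m i * Hstate d N m j
        = Hstate d N m (mix i j) * Hstate d N m (mix j i) := by
      rw [hfg, hfg, hfg, hfg, hfi, hgj, hfj, hgi]; ring
    have h1' : ∀ x, Hstate d N m x = c * omega d ^ (E x).val := fun x => rfl
    rw [h1' i, h1' j, h1' (mix i j), h1' (mix j i)] at h1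
    have h2 : c * c * (omega d ^ ((E i).val + (E j).val))
        = c * c * (omega d ^ ((E (mix i j)).val + (E (mix j i)).val)) := by
      rw [pow_add, pow_add]
      linear_combination h1
    have h3 := mul_left_cancel₀ (mul_ne_zero hcne hcne) h2
    have h4 := omega_pow_inj d (by omega) h3
    push_cast at h4
    simpa [ZMod.natCast_val, ZMod.cast_id] using h4
  -- Existence of a crossing nonzero edge
  obtain ⟨a, ha⟩ := hS
  obtain ⟨b, hb⟩ := hSc
  rw [Finset.mem_compl] at hb
  have hcross := exists_crossing m S (hconn.2 a b) ha hb
  -- Minimal crossing edge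
  set F : Finset (Finset (Fin N)) :=
    Finset.univ.filter (fun e => m e ≠ 0 ∧ (∃ x ∈ e, x ∈ S) ∧ ∃ y ∈ e, y ∉ S) with hF
  have hFne : F.Nonempty := by
    obtain ⟨e, h1, h2, h3⟩ := hcross
    exact ⟨e, by simp [hF, h1, h2, h3]⟩
  obtain ⟨e₀, he₀F, hmin⟩ := F.exists_min_image Finset.card hFne
  rw [hF, Finset.mem_filter] at he₀F
  obtain ⟨-, hm0, ⟨x₀, hx₀e, hx₀S⟩, ⟨y₀, hy₀e, hy₀S⟩⟩ := he₀F
  -- Specific inputs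
  set i0 : Fin N → Fin d := fun k => if k ∈ e₀ then ⟨1, by omega⟩ else ⟨0, by omega⟩ with hi0
  set j0 : Fin N → Fin d := fun _ => ⟨0, by omega⟩ with hj0
  -- Values of E at the four points
  have hcast : ∀ (A : Finset (Fin N)) (i : Fin N → Fin d),
      (∀ k, ((i k : ℕ) : ZMod d) = if k ∈ A then 1 else 0) →
      E i = ∑ e : Finset (Fin N), m e * (if e ⊆ A then 1 else 0) := by
    intro A i hi
    rw [hE]
    refine Finset.sum_congr rfl fun e _ => ?_
    congr 1
    rw [← prod_ind d A e]
    exact Finset.prod_congr rfl fun k _ => hi k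
  have hEi : E i0 = ∑ e : Finset (Fin N), m e * (if e ⊆ e₀ then 1 else 0) := by
    apply hcast
    intro k
    by_cases h : k ∈ e₀ <;> simp [hi0, h]
  have hEj : E j0 = ∑ e : Finset (Fin N), m e * (if e ⊆ (∅ : Finset (Fin N)) then 1 else 0) := by
    apply hcast
    intro k
    simp [hj0]
  have hEij : E (mix i0 j0) = ∑ e : Finset (Fin N), m e * (if e ⊆ e₀ ∩ S then 1 else 0) := by
    apply hcast
    intro k
    by_cases hkS : k ∈ S <;> by_cases hke : k ∈ e₀ <;>
      simp [hmix, hi0, hj0, hkS, hke, Finset.mem_inter]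
  have hEji : E (mix j0 i0) = ∑ e : Finset (Fin N), m e * (if e ⊆ e₀ \ S then 1 else 0) := by
    apply hcast
    intro k
    by_cases hkS : k ∈ S <;> by_cases hke : k ∈ e₀ <;>
      simp [hmix, hi0, hj0, hkS, hke, Finset.mem_sdiff]
  -- The combined sum is zero
  set T : Finset (Fin N) → ZMod d := fun e =>
    (if e ⊆ e₀ then 1 else 0) + (if e ⊆ (∅ : Finset (Fin N)) then 1 else 0)
      - (if e ⊆ e₀ ∩ S then 1 else 0) - (if e ⊆ e₀ \ S then 1 else 0) with hT
  have hzero : ∑ e : Finset (Fin N), m e * T e = 0 := by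
    have h := hkey i0 j0
    rw [hEi, hEj, hEij, hEji] at h
    simp only [hT, mul_add, mul_sub, Finset.sum_sub_distrib, Finset.sum_add_distrib]
    rw [sub_sub, sub_eq_zero, h]
  -- But the sum equals m e₀
  have hsum : ∑ e : Finset (Fin N), m e * T e = m e₀ := by
    rw [Finset.sum_eq_single_of_mem e₀ (Finset.mem_univ _)]
    · have h1 : e₀ ⊆ e₀ := subset_rfl
      have h2 : ¬ e₀ ⊆ (∅ : Finset (Fin N)) := fun h => (Finset.notMem_empty x₀) (h hx₀e)
      have h3 : ¬ e₀ ⊆ e₀ ∩ S := fun h => hy₀S (Finset.mem_inter.mp (h hy₀e)).2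
      have h4 : ¬ e₀ ⊆ e₀ \ S := fun h => (Finset.mem_sdiff.mp (h hx₀e)).2 hx₀S
      rw [hT]
      simp [h1, h2, h3, h4]
    · intro e _ hne
      by_cases hme : m e = 0
      · rw [hme, zero_mul]
      · have hTe : T e = 0 := by
          rw [hT]
          by_cases h1 : e ⊆ e₀
          · -- e cannot cross, else minimality forces e = e₀
            have hnotcross : ¬ ((∃ x ∈ e, x ∈ S) ∧ ∃ y ∈ e, y ∉ S) := by
              rintro ⟨hx, hy⟩
              have heF : e ∈ F := by
                rw [hF, Finset.mem_filter]
                exact ⟨Finset.mem_univ _, hme, hx, hy⟩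
              have hcard := hmin e heF
              exact hne (Finset.eq_of_subset_of_card_le h1 hcard)
            push_neg at hnotcross
            by_cases hx : ∃ x ∈ e, x ∈ S
            · -- all of e is in S
              have hsub : e ⊆ e₀ ∩ S := by
                intro k hk
                rw [Finset.mem_inter]
                exact ⟨h1 hk, hnotcross hx k hk⟩
              obtain ⟨x, hxe, hxS⟩ := hx
              have h2 : ¬ e ⊆ (∅ : Finset (Fin N)) := fun h => (Finset.notMem_empty x) (h hxe)
              have h4 : ¬ e ⊆ e₀ \ S := fun h => (Finset.mem_sdiff.mp (h hxe)).2 hxS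
              simp [h1, hsub, h2, h4]
            · -- no element of e is in S
              push_neg at hx
              have hsub : e ⊆ e₀ \ S := fun k hk =>
                Finset.mem_sdiff.mpr ⟨h1 hk, hx k hk⟩
              by_cases hemp : e = ∅
              · subst hemp
                simp
              · obtain ⟨x, hxe⟩ := Finset.nonempty_iff_ne_empty.mpr hemp
                have h2 : ¬ e ⊆ (∅ : Finset (Fin N)) := fun h => (Finset.notMem_empty x) (h hxe)
                have h3 : ¬ e ⊆ e₀ ∩ S := fun h => (hx x hxe) (Finset.mem_inter.mp (h hxe)).2
                simp [h1, hsub, h2, h3]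
          · have h2 : ¬ e ⊆ (∅ : Finset (Fin N)) := fun h => h1 (h.trans (Finset.empty_subset _))
            have h3 : ¬ e ⊆ e₀ ∩ S := fun h => h1 (h.trans Finset.inter_subset_left)
            have h4 : ¬ e ⊆ e₀ \ S := fun h => h1 (h.trans (Finset.sdiff_subset))
            simp [h1, h2, h3, h4]
        rw [hTe, mul_zero]
  rw [hzero] at hsum
  exact hm0 hsum.symm

end
end

section
/- Let e : Finset (Fin N) be a hyperedge and k ∈ Fin N a vertex. If k ∈ e, then C_e ∘ X_k ∘ C_e^{-1} = X_k ∘ (C_{e∖{k}})^{-1} as linear maps on the N-qudit space; if k ∉ e, then C_e ∘ X_k = X_k ∘ C_e. -/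
/-!
Passing a diagonal operator through `X_k` replaces its phase `φ(i)` by `φ(i + e_k)`. For `C_e`
the exponent `∏_{j ∈ e} i_j` does not involve `i_k` when `k ∉ e`, and is linear in `i_k` when
`k ∈ e`, so that shifting `i_k` by one (mod `d`, which `ω` cannot see) multiplies the phase by
`ω^{∏_{j ∈ e ∖ {k}} i_j}`; this is exactly the factor `C_{e ∖ {k}}` removes.
-/

open Finset

noncomputable section

/-- Diagonal operator with diagonal phase function `φ`. -/
def diagOp (d N : ℕ) (φ : (Fin N → Fin d) → ℂ) : Module.End ℂ (QV d N) where
  toFun ψ := fun i => φ i * ψ i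
  map_add' ψ ψ' := by funext i; simp [mul_add]
  map_smul' c ψ := by funext i; simp [smul_eq_mul]; ring

lemma diag_comm (d N : ℕ) (φ φ' : (Fin N → Fin d) → ℂ) :
    Commute (diagOp d N φ) (diagOp d N φ') := by
  apply LinearMap.ext; intro ψ; funext i
  simp [diagOp, Module.End.mul_apply]; ring

/-- The hyperedge operator `C_e`. -/
def Ce (d N : ℕ) (e : Finset (Fin N)) : Module.End ℂ (QV d N) :=
  diagOp d N fun i => omega d ^ ∏ k ∈ e, (i k : ℕ)

/-- The inverse of the hyperedge operator `C_e`. -/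
def CeInv (d N : ℕ) (e : Finset (Fin N)) : Module.End ℂ (QV d N) :=
  diagOp d N fun i => (omega d ^ ∏ k ∈ e, (i k : ℕ))⁻¹

/-- The generalized Pauli `X` operator on vertex `k`. -/
def Xop (d N : ℕ) [NeZero d] (k : Fin N) : Module.End ℂ (QV d N) where
  toFun ψ := fun i => ψ (Function.update i k (i k + 1))
  map_add' ψ ψ' := by funext i; simp
  map_smul' c ψ := by funext i; simp

lemma isPrimitiveRoot_omega (d : ℕ) [NeZero d] : IsPrimitiveRoot (omega d) d :=
  Complex.isPrimitiveRoot_exp d (NeZero.ne d)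

lemma omega_pow_eq_pow_of_modEq {d : ℕ} [NeZero d] {m n : ℕ} (h : m ≡ n [MOD d]) :
    omega d ^ m = omega d ^ n :=
  ((isPrimitiveRoot_omega d).isOfFinOrder (NeZero.ne d)).pow_eq_pow_iff_modEq.2 <|
    (isPrimitiveRoot_omega d).eq_orderOf ▸ h

lemma Fin.val_add_one_modEq {d : ℕ} [NeZero d] (a : Fin d) :
    ((a + 1 : Fin d) : ℕ) ≡ a + 1 [MOD d] := by
  rw [Fin.val_add, Fin.val_one']
  exact (Nat.mod_modEq _ d).trans ((Nat.mod_modEq 1 d).add_left a)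

lemma diagOp_mul_diagOp (d N : ℕ) (φ φ' : (Fin N → Fin d) → ℂ) :
    diagOp d N φ * diagOp d N φ' = diagOp d N (φ * φ') := by
  ext ψ i
  simp [diagOp, mul_assoc]

lemma Xop_mul_diagOp (d N : ℕ) [NeZero d] (k : Fin N) (φ : (Fin N → Fin d) → ℂ) :
    Xop d N k * diagOp d N φ =
      diagOp d N (fun i => φ (Function.update i k (i k + 1))) * Xop d N k := by
  ext ψ i
  simp [diagOp, Xop]

lemma prod_val_update_of_notMem {ι : Type*} [DecidableEq ι] {d : ℕ} {s : Finset ι} {k : ι}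
    (hk : k ∉ s) (i : ι → Fin d) (a : Fin d) :
    ∏ j ∈ s, (Function.update i k a j : ℕ) = ∏ j ∈ s, (i j : ℕ) :=
  prod_congr rfl fun j hj => by rw [Function.update_of_ne (ne_of_mem_of_not_mem hj hk)]

lemma omega_pow_prod_update_succ {ι : Type*} [DecidableEq ι] {d : ℕ} [NeZero d] {e : Finset ι}
    {k : ι} (hk : k ∈ e) (i : ι → Fin d) :
    omega d ^ ∏ j ∈ e, (Function.update i k (i k + 1) j : ℕ) =
      omega d ^ (∏ j ∈ e, (i j : ℕ)) * omega d ^ ∏ j ∈ e.erase k, (i j : ℕ) := by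
  rw [← pow_add, ← mul_prod_erase e _ hk, ← mul_prod_erase e _ hk, Function.update_self,
    prod_val_update_of_notMem (notMem_erase k e), ← add_one_mul]
  exact omega_pow_eq_pow_of_modEq ((Fin.val_add_one_modEq _).mul_right _)

theorem Ce_conj_Xop_general (d N : ℕ) [NeZero d] (e : Finset (Fin N)) (k : Fin N) :
    (k ∈ e → Ce d N e * Xop d N k * CeInv d N e = Xop d N k * CeInv d N (e.erase k)) ∧
    (k ∉ e → Ce d N e * Xop d N k = Xop d N k * Ce d N e) := by
  refine ⟨fun hk => ?_, fun hk => ?_⟩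
  · rw [Ce, CeInv, CeInv, mul_assoc, Xop_mul_diagOp, Xop_mul_diagOp, ← mul_assoc,
      diagOp_mul_diagOp]
    congr 2
    funext i
    have hω : omega d ^ ∏ j ∈ e, (i j : ℕ) ≠ 0 := pow_ne_zero _ (Complex.exp_ne_zero _)
    rw [Pi.mul_apply, omega_pow_prod_update_succ hk, prod_val_update_of_notMem (notMem_erase k e),
      mul_inv, ← mul_assoc, mul_inv_cancel₀ hω, one_mul]
  · rw [Ce, Xop_mul_diagOp]
    congr 2
    funext i
    rw [prod_val_update_of_notMem hk]

/-- If `k ∈ e` then `C_e ∘ X_k ∘ C_e⁻¹ = X_k ∘ (C_{e∖{k}})⁻¹`;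
if `k ∉ e` then `C_e` and `X_k` commute. -/
theorem Ce_conj_Xop (d N : ℕ) [NeZero d] (hd : 2 ≤ d) (hN : 1 ≤ N)
    (e : Finset (Fin N)) (k : Fin N) :
    (k ∈ e → Ce d N e * Xop d N k * CeInv d N e = Xop d N k * CeInv d N (e.erase k)) ∧
    (k ∉ e → Ce d N e * Xop d N k = Xop d N k * Ce d N e) :=
  Ce_conj_Xop_general d N e k

end
end

section
/- For every vertex k ∈ Fin N, applying the generalized Pauli operator X_k to a qudit hypergraph state yields another qudit hypergraph state: X_k |H(m)⟩ = |H(m')⟩, where the new multiplicity function is given by m'(e) = m(e) + m(e ∪ {k}) (in ZMod d) for hyperedges e with k ∉ e, and m'(e) = m(e) for hyperedges e with k ∈ e. -/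
open Finset

noncomputable section

/-! `X_k` substitutes `x_k + 1` for `x_k` in the phase polynomial `∑ₑ m(e) ∏_{j ∈ e} x_j`.
For `k ∉ e`, the monomial of `e ∪ {k}` then splits as `x_k x^e + x^e`, and the extra `x^e` is
absorbed into the coefficient of `e`. -/

theorem Finset.sum_univ_eq_sum_powerset_erase_add_insert {ι β : Type*} [Fintype ι]
    [DecidableEq ι] [AddCommMonoid β] (k : ι) (f : Finset ι → β) :
    ∑ e, f e = ∑ e ∈ (univ.erase k).powerset, (f e + f (insert k e)) := by
  have hk : (univ : Finset ι) = insert k (univ.erase k) := (insert_erase (mem_univ k)).symm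
  conv_lhs => rw [← powerset_univ, hk]
  rw [sum_powerset_insert (notMem_erase k univ), sum_add_distrib]

theorem Finset.sum_mul_prod_update_add {ι R : Type*} [Fintype ι] [DecidableEq ι]
    [CommSemiring R] (m : Finset ι → R) (c : ι → R) (k : ι) (a : R) :
    ∑ e, m e * ∏ j ∈ e, Function.update c k (c k + a) j =
      ∑ e, (if k ∈ e then m e else m e + a * m (e ∪ {k})) * ∏ j ∈ e, c j := by
  simp only [sum_univ_eq_sum_powerset_erase_add_insert k]
  refine sum_congr rfl fun e he => ?_
  have hk : k ∉ e := fun h => notMem_erase k univ (mem_powerset.1 he h)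
  rw [prod_update_of_notMem hk, prod_update_of_mem (mem_insert_self k e), prod_insert hk,
    sdiff_singleton_eq_erase, erase_insert hk, if_neg hk, if_pos (mem_insert_self k e),
    union_singleton]
  ring

theorem natCast_val_update_add_one {ι : Type*} [DecidableEq ι] {d : ℕ} [NeZero d]
    (i : ι → Fin d) (k : ι) :
    (fun j => ((Function.update i k (i k + 1) j : ℕ) : ZMod d)) =
      Function.update (fun j => ((i j : ℕ) : ZMod d)) k ((i k : ℕ) + 1) := by
  funext j
  rcases eq_or_ne j k with rfl | hj
  · simp [Fin.val_add]
  · simp [hj]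

theorem Xop_Hstate_general (d N : ℕ) [NeZero d]
    (m : Finset (Fin N) → ZMod d) (k : Fin N) :
    Xop d N k (Hstate d N m) =
      Hstate d N (fun e => if k ∈ e then m e else m e + m (e ∪ {k})) := by
  funext i
  have hphase := sum_mul_prod_update_add m (fun j => ((i j : ℕ) : ZMod d)) k 1
  simp only [one_mul, ← natCast_val_update_add_one] at hphase
  simp only [Hstate, Xop, LinearMap.coe_mk, AddHom.coe_mk, hphase]

/-- Applying the generalized Pauli `X_k` to a qudit hypergraph state
yields another qudit hypergraph state, with new multiplicity function
`m'(e) = m(e) + m(e ∪ {k})` for `k ∉ e` and `m'(e) = m(e)` for `k ∈ e`. -/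
theorem Xop_Hstate (d N : ℕ) [NeZero d] (hd : 2 ≤ d) (hN : 1 ≤ N)
    (m : Finset (Fin N) → ZMod d) (k : Fin N) :
    Xop d N k (Hstate d N m) =
      Hstate d N (fun e => if k ∈ e then m e else m e + m (e ∪ {k})) :=
  Xop_Hstate_general d N m k

end
end

section
/- Fix a vertex k ∈ Fin N and a measurement outcome a ∈ {0,…,d−1}. After measuring the generalized Z observable on vertex k of |H(m)⟩ and obtaining outcome a, the remaining N−1 qudits collapse to the qudit hypergraph state with multiplicity function m'(e') = m(e') + a·m(e' ∪ {k}) (in ZMod d) on hyperedges e' not containing k. Precisely: for every point i : Fin N → Fin d with i(k) = a, one has |H(m)⟩(i) = d^{−1/2} · d^{−(N−1)/2} · ω^{Σ_{e' : k ∉ e'} (m(e') + a·m(e' ∪ {k}))·∏_{l∈e'} i(l)}, the exponent computed in ZMod d. -/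
open Finset

noncomputable section

/-- After measuring the generalized `Z` observable on vertex `k`
of `|H(m)⟩` with outcome `a`, the remaining qudits collapse to the hypergraph state
with multiplicity `m'(e') = m(e') + a·m(e' ∪ {k})` on hyperedges `e'` not containing
`k`: for every point `i` with `i k = a`, the amplitude `|H(m)⟩(i)` factorizes as
`d^{-1/2} · d^{-(N-1)/2} · ω^{Σ_{e' : k ∉ e'} (m(e') + a·m(e' ∪ {k}))·∏_{l ∈ e'} i l}`. -/
theorem Hstate_Z_measurement (d N : ℕ) (hd : 2 ≤ d) (hN : 1 ≤ N)
    (m : Finset (Fin N) → ZMod d) (k : Fin N) (a : Fin d)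
    (i : Fin N → Fin d) (hik : i k = a) :
    Hstate d N m i =
      (d : ℂ) ^ (-(1 : ℂ)/2) * (d : ℂ) ^ (-((N : ℂ) - 1)/2) *
        omega d ^ (∑ e' ∈ Finset.univ.filter (fun e' : Finset (Fin N) => k ∉ e'),
          (m e' + ((a : ℕ) : ZMod d) * m (e' ∪ {k})) *
            ∏ l ∈ e', ((i l : ℕ) : ZMod d)).val := by
  classical
  have hd0 : (d : ℂ) ≠ 0 := Nat.cast_ne_zero.mpr (by omega)
  have hsum : (∑ e : Finset (Fin N), m e * ∏ l ∈ e, ((i l : ℕ) : ZMod d)) =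
      ∑ e' ∈ Finset.univ.filter (fun e' : Finset (Fin N) => k ∉ e'),
        (m e' + ((a : ℕ) : ZMod d) * m (e' ∪ {k})) * ∏ l ∈ e', ((i l : ℕ) : ZMod d) := by
    rw [← Finset.sum_filter_add_sum_filter_not Finset.univ (fun e : Finset (Fin N) => k ∉ e)]
    simp_rw [add_mul, Finset.sum_add_distrib]
    congr 1
    refine Finset.sum_bij' (fun e _ => e.erase k) (fun e' _ => e' ∪ {k}) ?_ ?_ ?_ ?_ ?_
    · intro e he
      simp
    · intro e' he'
      simp
    · intro e he
      simp only [Finset.mem_filter, not_not] at he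
      beta_reduce
      rw [Finset.union_comm, ← Finset.insert_eq]
      exact Finset.insert_erase he.2
    · intro e' he'
      simp only [Finset.mem_filter] at he'
      beta_reduce
      rw [Finset.union_comm, ← Finset.insert_eq, Finset.erase_insert he'.2]
    · intro e he
      simp only [Finset.mem_filter, not_not] at he
      have h1 : e.erase k ∪ {k} = e := by
        rw [Finset.union_comm, ← Finset.insert_eq]
        exact Finset.insert_erase he.2
      have h2 : ((i k : ℕ) : ZMod d) = ((a : ℕ) : ZMod d) := by rw [hik]
      beta_reduce
      rw [h1]
      rw [← Finset.prod_erase_mul e _ he.2, h2]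
      ring
  have hexp : -(N : ℂ)/2 = -(1 : ℂ)/2 + -((N : ℂ) - 1)/2 := by ring
  rw [Hstate, hsum, hexp, Complex.cpow_add _ _ hd0]

end
end

section
/- Suppose there exist a hyperedge e₀ and a vertex k ∈ e₀ with m(e₀) ≠ 0 in ZMod d and |e₀| ≥ 3. Then the canonical stabilizer generator g_k = X_k ∘ ∏_{e : k ∈ e} (C_{e∖{k}}^{-1})^{m(e)} is not an element of the generalized Pauli group: there exist no scalar c ∈ ℂ and exponent functions b, c' : Fin N → ℕ such that g_k = c • (∏_n X_n^{b(n)}) ∘ (∏_n Z_n^{c'(n)}). Consequently |H(m)⟩ fails to have a full set of local-Pauli stabilizer generators of the canonical form. -/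
/-!
Applied to the all-ones vector, `g_k` gives the phase `j ↦ ω ^ (-∑_{e ∋ k} m(e) ∏_{l ∈ e ∖ k} j_l)`,
whereas `c • X^b Z^c'` gives `c · ω ^ (a + ∑_n c'_n j_n)`, a phase that is affine in `j`.
Comparing them at the indicator points of the subsets `S ⊆ A := e₀ ∖ {k}`, the multilinear
exponent plus the affine one is constant in `S`, so its alternating sum over the subsets of `A`
vanishes. Since `|A| ≥ 2`, this alternating sum (a top-order finite difference) kills the affine
part, while on the multilinear part it picks out `±m(e₀)` alone; hence `m(e₀) = 0`.
-/

open Finset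

noncomputable section

/-- The generalized Pauli `Z` operator on vertex `k`. -/
def Zop (d N : ℕ) (k : Fin N) : Module.End ℂ (QV d N) :=
  diagOp d N fun i => omega d ^ (i k : ℕ)

lemma xop_comm (d N : ℕ) [NeZero d] (k k' : Fin N) :
    Commute (Xop d N k) (Xop d N k') := by
  rcases eq_or_ne k k' with rfl | h
  · exact Commute.refl _
  · apply LinearMap.ext; intro ψ; funext i
    simp only [Xop, Module.End.mul_apply, LinearMap.coe_mk, AddHom.coe_mk]
    rw [Function.update_of_ne h.symm, Function.update_of_ne h, Function.update_comm h]

/-- The canonical stabilizer generator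
`g_k = X_k ∘ ∏_{e : k ∈ e} (C_{e∖{k}}⁻¹)^{m(e)}` (exponents are the canonical
integer lifts of values in `ZMod d`). -/
def gk (d N : ℕ) [NeZero d] (m : Finset (Fin N) → ZMod d) (k : Fin N) :
    Module.End ℂ (QV d N) :=
  Xop d N k *
    Finset.noncommProd (Finset.univ.filter fun e : Finset (Fin N) => k ∈ e)
      (fun e => CeInv d N (e.erase k) ^ (m e).val)
      (fun _ _ _ _ _ => (diag_comm d N _ _).pow_pow _ _)

theorem Finset.sum_powerset_filter_superset_neg_one_pow_card {ι : Type*} [DecidableEq ι]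
    (A B : Finset ι) :
    ∑ S ∈ A.powerset with B ⊆ S, (-1 : ℤ) ^ #S = if B = A then (-1) ^ #A else 0 := by
  by_cases hBA : B ⊆ A
  · have hsupersets : {S ∈ A.powerset | B ⊆ S} = (A \ B).powerset.image (B ∪ ·) := by
      rw [← Icc_eq_image_powerset hBA]; ext S; simp [and_comm]
    have hinj : Set.InjOn (B ∪ ·) (A \ B).powerset := fun T hT U hU h => by
      simp only [coe_powerset, Set.mem_preimage, Set.mem_powerset_iff, coe_subset,
        subset_sdiff] at hT hU
      rw [← union_sdiff_cancel_left hT.2.symm, ← union_sdiff_cancel_left hU.2.symm]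
      exact congrArg (· \ B) h
    have hcard : ∀ T ∈ (A \ B).powerset, (-1 : ℤ) ^ #(B ∪ T) = (-1) ^ #B * (-1) ^ #T := by
      intro T hT
      rw [card_union_of_disjoint (disjoint_of_subset_right (mem_powerset.mp hT) disjoint_sdiff),
        pow_add]
    rw [hsupersets, sum_image hinj, sum_congr rfl hcard, ← mul_sum, sum_powerset_neg_one_pow_card]
    by_cases hAB : B = A
    · simp [hAB]
    · have : A \ B ≠ ∅ := fun h => hAB (hBA.antisymm (sdiff_eq_empty_iff_subset.mp h))
      simp [hAB, this]
  · have hne : B ≠ A := by rintro rfl; exact hBA le_rfl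
    rw [if_neg hne, sum_eq_zero]
    intro S hS
    simp only [mem_filter, mem_powerset] at hS
    exact absurd (hS.2.trans hS.1) hBA

section PowersetAltSum

variable {ι R : Type*} [CommRing R]

def powersetAltSum (A : Finset ι) (f : Finset ι → R) : R :=
  ∑ S ∈ A.powerset, (-1) ^ #S * f S

theorem powersetAltSum_add (A : Finset ι) (f g : Finset ι → R) :
    powersetAltSum A (f + g) = powersetAltSum A f + powersetAltSum A g := by
  simp only [powersetAltSum, Pi.add_apply, mul_add, sum_add_distrib]

theorem powersetAltSum_sum {κ : Type*} (A : Finset ι) (s : Finset κ) (f : κ → Finset ι → R) :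
    powersetAltSum A (fun S => ∑ i ∈ s, f i S) = ∑ i ∈ s, powersetAltSum A (f i) := by
  simp only [powersetAltSum, mul_sum]
  exact sum_comm

theorem powersetAltSum_const {A : Finset ι} (hA : A.Nonempty) (x : R) :
    powersetAltSum A (fun _ => x) = 0 := by
  have h := congrArg (Int.cast : ℤ → R) (sum_powerset_neg_one_pow_card_of_nonempty hA)
  push_cast at h
  rw [powersetAltSum, ← sum_mul, h, zero_mul]

variable [DecidableEq ι]

theorem powersetAltSum_ite_subset (A B : Finset ι) (x : R) :
    powersetAltSum A (fun S => if B ⊆ S then x else 0) = if B = A then (-1) ^ #A * x else 0 := by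
  have h := congrArg (Int.cast : ℤ → R) (sum_powerset_filter_superset_neg_one_pow_card A B)
  push_cast at h
  simp only [powersetAltSum, mul_ite, mul_zero]
  rw [← sum_filter, ← sum_mul, h, ite_mul, zero_mul]

theorem powersetAltSum_affine [Fintype ι] {A : Finset ι} (hA : 2 ≤ #A) (a : R) (c : ι → R) :
    powersetAltSum A (fun S => a + ∑ n, if n ∈ S then c n else 0) = 0 := by
  have hsplit : (fun S => a + ∑ n, if n ∈ S then c n else 0) =
      (fun _ => a) + fun S => ∑ n, if ({n} : Finset ι) ⊆ S then c n else 0 := by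
    simp only [singleton_subset_iff]; rfl
  have hsingleton (n : ι) : {n} ≠ A := fun h => by simp [← h] at hA
  rw [hsplit, powersetAltSum_add, powersetAltSum_const (card_pos.mp (by omega)),
    powersetAltSum_sum, zero_add]
  exact sum_eq_zero fun n _ => by rw [powersetAltSum_ite_subset, if_neg (hsingleton n)]

theorem powersetAltSum_erase_subset [Fintype ι] (m : Finset ι → R) {e₀ : Finset ι} {k : ι}
    (hk : k ∈ e₀) :
    powersetAltSum (e₀.erase k) (fun S => ∑ e with k ∈ e, if e.erase k ⊆ S then m e else 0) =
      (-1) ^ #(e₀.erase k) * m e₀ := by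
  rw [powersetAltSum_sum, sum_eq_single_of_mem e₀ (by simpa using hk)]
  · rw [powersetAltSum_ite_subset, if_pos rfl]
  · intro e he hne
    rw [powersetAltSum_ite_subset, if_neg]
    exact fun h => hne (erase_injOn' k (by simpa using he) hk h)

end PowersetAltSum

theorem omega_pow_eq_stdAddChar (d : ℕ) [NeZero d] (n : ℕ) :
    omega d ^ n = ZMod.stdAddChar (n : ZMod d) := by
  have h := ZMod.stdAddChar_coe (N := d) n
  push_cast at h
  rw [h, omega, ← Complex.exp_nat_mul]
  ring_nf

theorem AddChar.map_sum_eq_prod {A M ι : Type*} [AddCommMonoid A] [CommMonoid M]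
    (ψ : AddChar A M) (s : Finset ι) (f : ι → A) : ψ (∑ i ∈ s, f i) = ∏ i ∈ s, ψ (f i) :=
  map_prod ψ.toMonoidHom (fun i => Multiplicative.ofAdd (f i)) s

theorem Fin.natCast_val_add {d : ℕ} (a b : Fin d) :
    (((a + b : Fin d) : ℕ) : ZMod d) = ((a : ℕ) : ZMod d) + ((b : ℕ) : ZMod d) := by
  rw [Fin.val_add, ZMod.natCast_mod, Nat.cast_add]

theorem Fin.natCast_val_ite {d : ℕ} [NeZero d] (p : Prop) [Decidable p] :
    (((if p then 1 else 0 : Fin d) : ℕ) : ZMod d) = if p then 1 else 0 := by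
  split_ifs <;> simp [ZMod.natCast_mod]

section Operators

variable (d N : ℕ)

def diagHom : ((Fin N → Fin d) → ℂ) →* Module.End ℂ (QV d N) where
  toFun := diagOp d N
  map_one' := by ext; simp [diagOp]
  map_mul' φ φ' := by ext; simp [diagOp, mul_assoc]

theorem diagOp_pow (φ : (Fin N → Fin d) → ℂ) (n : ℕ) :
    diagOp d N φ ^ n = diagOp d N (φ ^ n) :=
  (map_pow (diagHom d N) φ n).symm

theorem noncommProd_diagOp {ι : Type*} (s : Finset ι) (φ : ι → (Fin N → Fin d) → ℂ) (comm) :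
    s.noncommProd (fun i => diagOp d N (φ i)) comm = diagOp d N (∏ i ∈ s, φ i) := by
  rw [← noncommProd_eq_prod s φ]
  exact (map_noncommProd s φ _ (diagHom d N)).symm

variable [NeZero d]

def shiftHom : Multiplicative (Fin N → Fin d) →* Module.End ℂ (QV d N) where
  toFun v :=
    { toFun := fun ψ i => ψ (i + v.toAdd)
      map_add' := fun _ _ => rfl
      map_smul' := fun _ _ => rfl }
  map_one' := by ext; simp
  map_mul' v w := by ext; simp [add_assoc]

theorem Xop_eq_shiftHom (k : Fin N) :
    Xop d N k = shiftHom d N (Multiplicative.ofAdd (Pi.single k 1)) := by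
  refine LinearMap.ext fun ψ => funext fun i => congrArg ψ (funext fun l => ?_)
  rcases eq_or_ne l k with rfl | hl <;> simp [*]

theorem exists_noncommProd_Xop_pow_eq_shiftHom (b : Fin N → ℕ) :
    ∃ v, Finset.noncommProd Finset.univ (fun n : Fin N => Xop d N n ^ b n)
      (fun _ _ _ _ _ => (xop_comm d N _ _).pow_pow _ _) = shiftHom d N v := by
  simp_rw [Xop_eq_shiftHom, ← map_pow]
  exact ⟨_, (map_noncommProd _ _ (fun _ _ _ _ _ => Commute.all _ _) _).symm⟩

def pauliXZ (b c' : Fin N → ℕ) : Module.End ℂ (QV d N) :=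
  (Finset.noncommProd Finset.univ (fun n : Fin N => Xop d N n ^ b n)
    (fun _ _ _ _ _ => (xop_comm d N _ _).pow_pow _ _)) *
  (Finset.noncommProd Finset.univ (fun n : Fin N => Zop d N n ^ c' n)
    (fun _ _ _ _ _ => (diag_comm d N _ _).pow_pow _ _))

theorem exists_pauliXZ_apply_one (b c' : Fin N → ℕ) :
    ∃ a : ZMod d, ∀ j, pauliXZ d N b c' (fun _ => 1) j =
      ZMod.stdAddChar (a + ∑ n, (c' n : ZMod d) * ((j n : ℕ) : ZMod d)) := by
  obtain ⟨v, hv⟩ := exists_noncommProd_Xop_pow_eq_shiftHom d N b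
  have hZ : Finset.noncommProd Finset.univ (fun n : Fin N => Zop d N n ^ c' n)
      (fun _ _ _ _ _ => (diag_comm d N _ _).pow_pow _ _) =
        diagOp d N (∏ n, (fun i => omega d ^ (i n : ℕ)) ^ c' n) := by
    simp_rw [Zop, diagOp_pow]
    exact noncommProd_diagOp d N _ _ _
  refine ⟨∑ n, (c' n : ZMod d) * ((v.toAdd n : ℕ) : ZMod d), fun j => ?_⟩
  rw [pauliXZ, hv, hZ]
  change (∏ n, (fun i => omega d ^ (i n : ℕ)) ^ c' n) (j + v.toAdd) * 1 = _
  simp only [Finset.prod_apply, Pi.pow_apply, mul_one, omega_pow_eq_stdAddChar,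
    ← AddChar.map_nsmul_eq_pow, ← AddChar.map_sum_eq_prod]
  rw [← sum_add_distrib]
  simp only [Pi.add_apply, Fin.natCast_val_add, nsmul_eq_mul]
  exact congrArg _ (sum_congr rfl fun n _ => by ring)

theorem gk_apply_one (m : Finset (Fin N) → ZMod d) (k : Fin N) (j : Fin N → Fin d) :
    gk d N m k (fun _ => 1) j =
      ZMod.stdAddChar (-∑ e with k ∈ e, m e * ∏ l ∈ e.erase k, ((j l : ℕ) : ZMod d)) := by
  have hC : Finset.noncommProd (Finset.univ.filter fun e : Finset (Fin N) => k ∈ e)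
      (fun e => CeInv d N (e.erase k) ^ (m e).val)
      (fun _ _ _ _ _ => (diag_comm d N _ _).pow_pow _ _) =
        diagOp d N (∏ e with k ∈ e,
          (fun i => (omega d ^ ∏ l ∈ e.erase k, (i l : ℕ))⁻¹) ^ (m e).val) := by
    simp_rw [CeInv, diagOp_pow]
    exact noncommProd_diagOp d N _ _ _
  rw [gk, hC]
  change (∏ e with k ∈ e, (fun i => (omega d ^ ∏ l ∈ e.erase k, (i l : ℕ))⁻¹) ^ (m e).val)
    (Function.update j k (j k + 1)) * 1 = _
  simp only [Finset.prod_apply, Pi.pow_apply, mul_one, omega_pow_eq_stdAddChar,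
    ← AddChar.map_neg_eq_inv, ← AddChar.map_nsmul_eq_pow, ← AddChar.map_sum_eq_prod,
    ← sum_neg_distrib]
  refine congrArg _ (sum_congr rfl fun e _ => ?_)
  rw [nsmul_eq_mul, ZMod.natCast_val, ZMod.cast_id', id, Nat.cast_prod, mul_neg]
  congr 2
  exact prod_congr rfl fun l hl => by rw [Function.update_of_ne (ne_of_mem_erase hl)]

end Operators

theorem ZMod.add_eq_of_stdAddChar_neg_eq_mul {α : Type*} {n : ℕ} [NeZero n] {x y : α → ZMod n}
    {c : ℂ} (h : ∀ a, stdAddChar (-x a) = c * stdAddChar (y a)) (a b : α) :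
    x a + y a = x b + y b := by
  have hc : ∀ a, stdAddChar (-(x a + y a)) = c := fun a => by
    rw [neg_add, AddChar.map_add_eq_mul, h, mul_assoc, ← AddChar.map_add_eq_mul, add_neg_cancel,
      AddChar.map_zero_eq_one, mul_one]
  exact neg_inj.mp (injective_stdAddChar ((hc a).trans (hc b).symm))

theorem gk_not_Pauli_general (d N : ℕ) [NeZero d]
    (m : Finset (Fin N) → ZMod d) (e₀ : Finset (Fin N)) (k : Fin N)
    (hk : k ∈ e₀) (hm : m e₀ ≠ 0) (hcard : 3 ≤ e₀.card) :
    ¬ ∃ (c : ℂ) (b c' : Fin N → ℕ),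
        gk d N m k =
          c • ((Finset.noncommProd Finset.univ (fun n : Fin N => Xop d N n ^ b n)
                  (fun _ _ _ _ _ => (xop_comm d N _ _).pow_pow _ _)) *
               (Finset.noncommProd Finset.univ (fun n : Fin N => Zop d N n ^ c' n)
                  (fun _ _ _ _ _ => (diag_comm d N _ _).pow_pow _ _))) := by
  rintro ⟨c, b, c', heq⟩
  obtain ⟨a, hP⟩ := exists_pauliXZ_apply_one d N b c'
  let F (S : Finset (Fin N)) : ZMod d := ∑ e with k ∈ e, if e.erase k ⊆ S then m e else 0
  let G (S : Finset (Fin N)) : ZMod d := a + ∑ n, if n ∈ S then (c' n : ZMod d) else 0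
  have hphase (S : Finset (Fin N)) : ZMod.stdAddChar (-F S) = c * ZMod.stdAddChar (G S) := by
    have h := congrFun (LinearMap.congr_fun heq fun _ => 1) fun n => if n ∈ S then 1 else 0
    rw [gk_apply_one, LinearMap.smul_apply, Pi.smul_apply, smul_eq_mul] at h
    change _ = c * pauliXZ d N b c' _ _ at h
    simpa [hP, Fin.natCast_val_ite, prod_boole, F, G, subset_iff] using h
  have hA : 2 ≤ #(e₀.erase k) := by rw [card_erase_of_mem hk]; omega
  have hsum : powersetAltSum (e₀.erase k) (F + G) = 0 := by
    rw [show F + G = fun _ => F ∅ + G ∅ from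
        funext fun S => ZMod.add_eq_of_stdAddChar_neg_eq_mul hphase S ∅,
      powersetAltSum_const (card_pos.mp (by omega))]
  rw [powersetAltSum_add, powersetAltSum_erase_subset m hk, powersetAltSum_affine hA,
    add_zero] at hsum
  exact hm (((isUnit_neg_one).pow _).mul_right_eq_zero.mp hsum)

/-- If some hyperedge `e₀` of nonzero multiplicity with `|e₀| ≥ 3`
contains the vertex `k`, then the canonical stabilizer generator `g_k` is not an
element of the generalized Pauli group: it is not of the form
`c • (∏ₙ Xₙ^{b n}) ∘ (∏ₙ Zₙ^{c' n})` for any scalar `c` and exponents `b, c'`. -/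
theorem gk_not_Pauli (d N : ℕ) [NeZero d] (hd : 2 ≤ d) (hN : 1 ≤ N)
    (m : Finset (Fin N) → ZMod d) (e₀ : Finset (Fin N)) (k : Fin N)
    (hk : k ∈ e₀) (hm : m e₀ ≠ 0) (hcard : 3 ≤ e₀.card) :
    ¬ ∃ (c : ℂ) (b c' : Fin N → ℕ),
        gk d N m k =
          c • ((Finset.noncommProd Finset.univ (fun n : Fin N => Xop d N n ^ b n)
                  (fun _ _ _ _ _ => (xop_comm d N _ _).pow_pow _ _)) *
               (Finset.noncommProd Finset.univ (fun n : Fin N => Zop d N n ^ c' n)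
                  (fun _ _ _ _ _ => (diag_comm d N _ _).pow_pow _ _))) :=
  gk_not_Pauli_general d N m e₀ k hk hm hcard

end
end

section
/- Let d be a prime number, n ≥ 1 an integer, ω = exp(2πi/d), and a an integer. Then Σ_{v : Fin n → Fin d} ω^{a·∏_{l} v(l)} equals d^n if d divides a, and equals d^n − d·(d−1)^{n−1} if d does not divide a, where ∏_l v(l) denotes the integer product of the values v(l) ∈ {0,…,d−1}. -/
open Finset

noncomputable section

lemma sum_omega_zero (d : ℕ) (hd : d ≠ 0) (b : ℤ) (hb : ¬ (d:ℤ) ∣ b) :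
    ∑ k : Fin d, omega d ^ (b * (k : ℤ)) = 0 := by
  have hprim := Complex.isPrimitiveRoot_exp d hd
  have hne : omega d ^ b ≠ 1 := fun h => hb ((hprim.zpow_eq_one_iff_dvd b).mp h)
  have h1 : ∑ k : Fin d, omega d ^ (b * (k : ℤ)) = ∑ k ∈ Finset.range d, (omega d ^ b) ^ k := by
    rw [Fin.sum_univ_eq_sum_range (fun k => omega d ^ (b * (k:ℤ)))]
    refine Finset.sum_congr rfl fun k _ => ?_
    rw [← zpow_natCast (omega d ^ b) k, ← zpow_mul]
  have h2 : (omega d ^ b) ^ d = 1 := by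
    rw [← zpow_natCast (omega d ^ b) d, ← zpow_mul]
    exact (hprim.zpow_eq_one_iff_dvd _).mpr ⟨b, by ring⟩
  rw [h1, geom_sum_eq hne, h2]
  simp

lemma not_dvd_mul_fin (d : ℕ) [NeZero d] (hd : d.Prime) (a : ℤ) (ha : ¬ (d:ℤ) ∣ a)
    (k : Fin d) (hk : k ≠ 0) : ¬ (d:ℤ) ∣ a * (k : ℤ) := by
  intro h
  rcases (((Nat.prime_iff_prime_int.mp hd).dvd_mul.mp h)) with h' | h'
  · exact ha h'
  · have : d ∣ (k : ℕ) := by exact_mod_cast h'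
    have hk0 : (k : ℕ) ≠ 0 := fun h0 => hk (Fin.ext (by simpa using h0))
    exact absurd (Nat.le_of_dvd (Nat.pos_of_ne_zero hk0) this) (not_le.mpr k.isLt)

lemma key (d : ℕ) (hd : d.Prime) : ∀ n : ℕ, ∀ a : ℤ, ¬ (d:ℤ) ∣ a →
    ∑ v : Fin (n+1) → Fin d, omega d ^ (a * ∏ l, (v l : ℤ)) =
      (d:ℂ)^(n+1) - (d:ℂ) * ((d:ℂ)-1)^n := by
  haveI : NeZero d := ⟨hd.ne_zero⟩
  intro n
  induction n with
  | zero =>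
    intro a ha
    have h := sum_omega_zero d hd.ne_zero a ha
    rw [show ∑ v : Fin 1 → Fin d, omega d ^ (a * ∏ l, (v l : ℤ))
        = ∑ k : Fin d, omega d ^ (a * (k : ℤ)) from
      Fintype.sum_equiv (Equiv.funUnique (Fin 1) (Fin d)) _ _ (fun v => by simp), h]
    ring
  | succ n ih =>
    intro a ha
    have hsplit : ∑ v : Fin (n+2) → Fin d, omega d ^ (a * ∏ l, (v l : ℤ))
        = ∑ k : Fin d, ∑ v : Fin (n+1) → Fin d, omega d ^ ((a * (k:ℤ)) * ∏ l, (v l : ℤ)) := by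
      have e1 : ∑ v : Fin (n+2) → Fin d, omega d ^ (a * ∏ l, (v l : ℤ))
          = ∑ p : Fin d × (Fin (n+1) → Fin d),
              omega d ^ ((a * ((p.1 : Fin d) : ℤ)) * ∏ l, (p.2 l : ℤ)) := by
        refine Fintype.sum_equiv (Fin.consEquiv (fun _ : Fin (n+2) => Fin d)).symm _ _ fun v => ?_
        simp [Fin.consEquiv, Fin.prod_univ_succ, Fin.tail, mul_assoc]
      rw [e1, Fintype.sum_prod_type]
    have hterm : ∀ k : Fin d,
        (∑ v : Fin (n+1) → Fin d, omega d ^ ((a * (k:ℤ)) * ∏ l, (v l : ℤ)))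
          = ((d:ℂ)^(n+1) - (d:ℂ) * ((d:ℂ)-1)^n)
            + (if k = 0 then (d:ℂ) * ((d:ℂ)-1)^n else 0) := by
      intro k
      by_cases hk : k = 0
      · subst hk
        rw [if_pos rfl]
        have : ∀ v : Fin (n+1) → Fin d,
            omega d ^ ((a * ((0 : Fin d):ℤ)) * ∏ l, (v l : ℤ)) = 1 := by
          intro v; simp
        rw [Finset.sum_congr rfl (fun v _ => this v), Finset.sum_const, Finset.card_univ]
        simp [Fintype.card_fun]
      · rw [if_neg hk, add_zero]
        exact ih (a * (k:ℤ)) (not_dvd_mul_fin d hd a ha k hk)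
    rw [hsplit, Finset.sum_congr rfl (fun k _ => hterm k), Finset.sum_add_distrib,
      Finset.sum_const, Finset.card_univ, Finset.sum_ite_eq' Finset.univ (0 : Fin d)
        (fun _ => (d:ℂ) * ((d:ℂ)-1)^n)]
    simp [Fintype.card_fin]
    ring

/-- For `d` prime, `n ≥ 1` and an integer `a`, the exponential sum
`Σ_{v : Fin n → Fin d} ω^{a·∏ₗ v l}` equals `d^n` when `d ∣ a`, and
`d^n − d·(d−1)^{n−1}` otherwise. -/
theorem exp_sum_prod (d n : ℕ) (hd : d.Prime) (hn : 1 ≤ n) (a : ℤ) :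
    ∑ v : Fin n → Fin d, omega d ^ (a * ∏ l, (v l : ℤ)) =
      if (d : ℤ) ∣ a then (d : ℂ) ^ n
      else (d : ℂ) ^ n - (d : ℂ) * ((d : ℂ) - 1) ^ (n - 1) := by
  by_cases ha : (d:ℤ) ∣ a
  · rw [if_pos ha]
    have : ∀ v : Fin n → Fin d, omega d ^ (a * ∏ l, (v l : ℤ)) = 1 := by
      intro v
      exact ((Complex.isPrimitiveRoot_exp d hd.ne_zero).zpow_eq_one_iff_dvd _).mpr
        (Dvd.dvd.mul_right ha _)
    rw [Finset.sum_congr rfl (fun v _ => this v), Finset.sum_const, Finset.card_univ]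
    simp [Fintype.card_fun]
  · rw [if_neg ha]
    obtain ⟨m, rfl⟩ : ∃ m, n = m + 1 := ⟨n - 1, (Nat.succ_pred_eq_of_pos hn).symm⟩
    simpa using key d hd m a ha

end
end

section
/- Let d be a prime number, n ≥ 1 an integer, and m an integer with 1 ≤ m ≤ d−1, and define Ω : Matrix (Fin d) (Fin d) ℂ by Ω i j = Σ_{v : Fin n → Fin d} ω^{m·i·j·∏_l v(l)} (all factors read as integers in {0,…,d−1}). Then Ω has rank exactly 2; equivalently, the residual two-qudit state obtained from the N-uniform qudit hypergraph state (N = n + 2) by projecting the last n qudits onto |+⟩ has Schmidt rank 2, so its entanglement is equivalent to that of a two-qubit entangled state. -/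
/-!
Splitting off one coordinate `a` of `v`, the character sum `∑ₐ ω^(c·a)` is `d` if `d ∣ c` and `0`
otherwise. For `d` prime this leaves `d` times a count of tuples, giving `Ω i j = dⁿ` when `i = 0`
or `j = 0` and `Ω i j = d(dⁿ⁻¹ - (d-1)ⁿ⁻¹)` otherwise. A matrix that is constant on a cross (one
row and one column) and constant off it has only two distinct rows, and they are independent as
soon as the two values differ and the value on the cross is nonzero.
-/

open Finset

noncomputable section

theorem Fin.dvd_val_iff_eq_zero {p : ℕ} [NeZero p] (a : Fin p) : p ∣ (a : ℕ) ↔ a = 0 := by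
  refine ⟨fun h => Fin.val_eq_zero_iff.mp (Nat.eq_zero_of_dvd_of_lt h a.isLt), ?_⟩
  rintro rfl
  simp

theorem Nat.Prime.dvd_mul_prod_fin_iff {ι : Type*} [Fintype ι] {p k : ℕ} [NeZero p]
    (hp : p.Prime) (hk : ¬ p ∣ k) (w : ι → Fin p) :
    p ∣ k * ∏ l, (w l : ℕ) ↔ ∃ l, w l = 0 := by
  simp [hp.prime.dvd_mul, hk, Prime.dvd_finsetProd_iff hp.prime, Fin.dvd_val_iff_eq_zero]

theorem Fin.sum_boole_forall_ne_zero {K : Type*} [CommSemiring K] (p n : ℕ) [NeZero p] :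
    ∑ w : Fin n → Fin p, (if ∀ l, w l ≠ 0 then 1 else 0 : K) = ((p - 1 : ℕ) : K) ^ n := by
  have hcard : ∑ a : Fin p, (if a ≠ 0 then 1 else 0 : K) = (p - 1 : ℕ) := by
    rw [sum_boole, filter_ne', card_erase_of_mem (mem_univ _), card_univ, Fintype.card_fin]
  simp only [← hcard, Fintype.sum_pow, Finset.prod_boole, Finset.mem_univ, forall_const]

theorem IsPrimitiveRoot.sum_fin_pow_mul {K : Type*} [CommRing K] [IsDomain K] {ζ : K} {p : ℕ}
    (hζ : IsPrimitiveRoot ζ p) (hp : p.Prime) (k : ℕ) :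
    ∑ a : Fin p, ζ ^ (k * a) = if p ∣ k then (p : K) else 0 := by
  split_ifs with hk
  · obtain ⟨c, rfl⟩ := hk
    simp [pow_mul, hζ.pow_eq_one]
  · have hζk : IsPrimitiveRoot (ζ ^ k) p :=
      hζ.pow_of_coprime k (Nat.coprime_comm.mp (hp.coprime_iff_not_dvd.mpr hk))
    simp_rw [pow_mul]
    rw [Fin.sum_univ_eq_sum_range (fun a => (ζ ^ k) ^ a)]
    exact hζk.geom_sum_eq_zero hp.one_lt

theorem IsPrimitiveRoot.sum_pow_mul_prod {K : Type*} [Field K] {ζ : K} {p : ℕ}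
    (hζ : IsPrimitiveRoot ζ p) (hp : p.Prime) (k n : ℕ) :
    ∑ v : Fin (n + 1) → Fin p, ζ ^ (k * ∏ l, (v l : ℕ)) =
      if p ∣ k then (p : K) ^ (n + 1) else p * (p ^ n - (p - 1) ^ n) := by
  have : NeZero p := ⟨hp.ne_zero⟩
  have hsplit : ∑ v : Fin (n + 1) → Fin p, ζ ^ (k * ∏ l, (v l : ℕ)) =
      ∑ w : Fin n → Fin p, if p ∣ k * ∏ l, (w l : ℕ) then (p : K) else 0 := by
    rw [← (Fin.consEquiv _).sum_comp, Fintype.sum_prod_type, Finset.sum_comm]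
    refine sum_congr rfl fun w _ => ?_
    simp only [← hζ.sum_fin_pow_mul hp, Fin.consEquiv_apply, Fin.prod_univ_succ, Fin.cons_zero,
      Fin.cons_succ]
    exact sum_congr rfl fun a _ => by rw [← mul_assoc, mul_right_comm]
  rw [hsplit]
  split_ifs with hk
  · simp [hk.mul_right, pow_succ]
  · have hterm : ∀ w : Fin n → Fin p, (if p ∣ k * ∏ l, (w l : ℕ) then (p : K) else 0) =
        p * (1 - if ∀ l, w l ≠ 0 then 1 else 0) := by
      intro w
      simp only [hp.dvd_mul_prod_fin_iff hk]
      split_ifs <;> simp_all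
    simp_rw [hterm, ← mul_sum, sum_sub_distrib, Fin.sum_boole_forall_ne_zero]
    simp [Nat.cast_sub hp.one_le]

theorem Matrix.rank_of_ite_or_eq_eq_two {K m n : Type*} [Field K] [Finite m] [Fintype n]
    [DecidableEq m] [DecidableEq n] [Nontrivial m] [Nontrivial n] (i₀ : m) (j₀ : n) {a b : K}
    (ha : a ≠ 0) (hab : a ≠ b) : (Matrix.of fun i j => if i = i₀ ∨ j = j₀ then a else b).rank = 2 := by
  set A : Matrix m n K := Matrix.of fun i j => if i = i₀ ∨ j = j₀ then a else b
  set r₀ : n → K := fun _ => a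
  set r₁ : n → K := fun j => if j = j₀ then a else b
  have hrow : ∀ i, A.row i = if i = i₀ then r₀ else r₁ := by
    intro i
    ext j
    by_cases hi : i = i₀ <;> simp [A, hi, r₀, r₁]
  have hrange : Set.range A.row = Set.range ![r₀, r₁] := by
    ext r
    simp only [Set.mem_range, hrow]
    constructor
    · rintro ⟨i, rfl⟩
      by_cases hi : i = i₀
      · exact ⟨0, by simp [hi]⟩
      · exact ⟨1, by simp [hi]⟩
    · rintro ⟨k, rfl⟩
      fin_cases k
      · exact ⟨i₀, by simp⟩
      · obtain ⟨i, hi⟩ := exists_ne i₀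
        exact ⟨i, by simp [hi]⟩
  have hli : LinearIndependent K ![r₀, r₁] := by
    rw [LinearIndependent.pair_iff]
    intro s t hst
    obtain ⟨j, hj⟩ := exists_ne j₀
    have h₀ := congrFun hst j₀
    have h₁ := congrFun hst j
    simp only [Pi.add_apply, Pi.smul_apply, smul_eq_mul, Pi.zero_apply, r₀, r₁, if_true,
      if_neg hj] at h₀ h₁
    have ht : t = 0 := by
      have : t * (a - b) = 0 := by linear_combination h₀ - h₁
      simpa [sub_ne_zero.mpr hab] using this
    subst ht
    exact ⟨by simpa [ha] using h₀, rfl⟩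
  rw [rank_eq_finrank_span_row, hrange, finrank_span_eq_card hli, Fintype.card_fin]

/-- For `d` prime, `n ≥ 1` and `1 ≤ m ≤ d − 1`, the amplitude
matrix `Ω i j = Σ_{v : Fin n → Fin d} ω^{m·i·j·∏ₗ v l}` of the residual two-qudit
state (obtained from the `N`-uniform qudit hypergraph state, `N = n + 2`, by
projecting the last `n` qudits onto `|+⟩`) has rank exactly 2: the residual state
has Schmidt rank 2, so its entanglement is equivalent to two-qubit entanglement. -/
theorem residual_matrix_rank_eq_two (d n m : ℕ) (hd : d.Prime) (hn : 1 ≤ n)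
    (hm1 : 1 ≤ m) (hm2 : m ≤ d - 1)
    (Ω : Matrix (Fin d) (Fin d) ℂ)
    (hΩ : ∀ i j : Fin d,
      Ω i j = ∑ v : Fin n → Fin d,
        omega d ^ (m * (i : ℕ) * (j : ℕ) * ∏ l, (v l : ℕ))) :
    Ω.rank = 2 := by
  have : NeZero d := ⟨hd.ne_zero⟩
  have : Nontrivial (Fin d) := Fin.nontrivial_iff_two_le.mpr hd.two_le
  obtain ⟨n, rfl⟩ : ∃ n', n = n' + 1 := ⟨n - 1, by omega⟩
  have hω : IsPrimitiveRoot (omega d) d := Complex.isPrimitiveRoot_exp d hd.ne_zero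
  have hm : ¬ d ∣ m := Nat.not_dvd_of_pos_of_lt hm1 (by omega)
  have hdvd : ∀ i j : Fin d, d ∣ m * i * j ↔ i = 0 ∨ j = 0 := by
    simp [hd.prime.dvd_mul, hm, Fin.dvd_val_iff_eq_zero]
  have hΩ' : Ω = Matrix.of fun i j =>
      if i = 0 ∨ j = 0 then (d : ℂ) ^ (n + 1) else d * (d ^ n - (d - 1) ^ n) := by
    ext i j
    simp only [hΩ, hω.sum_pow_mul_prod hd, hdvd, Matrix.of_apply]
  have hd₀ : (d : ℂ) ≠ 0 := by exact_mod_cast hd.ne_zero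
  have hd₁ : (d : ℂ) - 1 ≠ 0 := sub_ne_zero.mpr (by exact_mod_cast hd.ne_one)
  rw [hΩ']
  exact Matrix.rank_of_ite_or_eq_eq_two 0 0 (pow_ne_zero _ hd₀) fun h =>
    mul_ne_zero hd₀ (pow_ne_zero n hd₁) (by linear_combination h)
end
end

section
/- For every d ≥ 3 and N ≥ 1, the set of qudit hypergraph states is a proper subset of the set of generalized real equally weighted states: there exists a phase function f : (Fin N → Fin d) → ZMod d such that the generalized real equally weighted state with amplitudes d^{−N/2}·ω^{f(i)} is different from |H(m)⟩ for every multiplicity function m. Equivalently, the map sending m : Finset (Fin N) → ZMod d to the function i ↦ Σ_{e ⊆ Fin N} m(e)·∏_{k∈e} i(k) ∈ ZMod d is not surjective onto the functions (Fin N → Fin d) → ZMod d. -/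
open Finset

noncomputable section

/-- For `d ≥ 3` (and any `N ≥ 1`), the qudit hypergraph states form
a *proper* subset of the generalized real equally weighted states: some phase
function `f` yields a generalized real equally weighted state
`i ↦ d^{-N/2}·ω^{f i}` that differs from every `|H(m)⟩`. Equivalently, the map
sending a multiplicity function `m` to the phase function
`i ↦ Σ_e m(e)·∏_{k ∈ e} i k` is not surjective. -/
theorem hypergraph_states_proper_subset_of_GREWS (d N : ℕ) (hd : 3 ≤ d) (hN : 1 ≤ N) :
    (∃ f : (Fin N → Fin d) → ZMod d,
      ∀ m : Finset (Fin N) → ZMod d,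
        (fun i : Fin N → Fin d => (d : ℂ) ^ (-(N : ℂ)/2) * omega d ^ (f i).val) ≠
          Hstate d N m) ∧
    ¬ Function.Surjective
        (fun (m : Finset (Fin N) → ZMod d) (i : Fin N → Fin d) =>
          ∑ e : Finset (Fin N), m e * ∏ k ∈ e, ((i k : ℕ) : ZMod d)) := by

  have hd0 : d ≠ 0 := by omega
  haveI : NeZero d := ⟨hd0⟩
  have hnonsurj : ¬ Function.Surjective
        (fun (m : Finset (Fin N) → ZMod d) (i : Fin N → Fin d) =>
          ∑ e : Finset (Fin N), m e * ∏ k ∈ e, ((i k : ℕ) : ZMod d)) := by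
    intro hs
    have hcard := Fintype.card_le_of_surjective _ hs
    simp only [Fintype.card_fun, ZMod.card, Fintype.card_finset, Fintype.card_fin] at hcard
    have h1 : 2 ^ N < d ^ N := Nat.pow_lt_pow_left (by omega) (by omega)
    have h2 : d ^ (2 ^ N) < d ^ (d ^ N) := Nat.pow_lt_pow_right (by omega) h1
    omega
  refine ⟨?_, hnonsurj⟩
  rw [Function.Surjective] at hnonsurj
  push_neg at hnonsurj
  obtain ⟨f, hf⟩ := hnonsurj
  refine ⟨f, fun m heq => hf m ?_⟩
  funext i
  have h := congrFun heq i
  simp only [Hstate] at h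
  have hD : (d : ℂ) ^ (-(N : ℂ)/2) ≠ 0 := by
    rw [Ne, Complex.cpow_eq_zero_iff]
    push_neg
    intro hc
    exact absurd (by exact_mod_cast hc) hd0
  have h' : omega d ^ (f i).val =
      omega d ^ (∑ e : Finset (Fin N), m e * ∏ k ∈ e, ((i k : ℕ) : ZMod d)).val :=
    mul_left_cancel₀ hD h
  have hprim : IsPrimitiveRoot (omega d) d := by
    simpa [omega] using Complex.isPrimitiveRoot_exp d hd0
  have := hprim.pow_inj (ZMod.val_lt _) (ZMod.val_lt _) h'
  exact (ZMod.val_injective d this).symm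


end
end
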